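/- arXiv:2305.15857 — 7 statements merged into one kernel-verified Lean document; each statement's English description precedes it below -/
import Mathlib

section
/- Let Ω ⊆ ℝ³ be open, let f, g : Ω → ℝ be differentiable with f > 0 and g > 0 on Ω, and let w : Ω → ℍ be differentiable. Then w satisfies the Vekua equation Dw = (∇f/f)·star(w) + (∇g/g)·w on Ω if and only if the function u := Sc(w)/(f·g) + (f/g)·Vec(w) satisfies the quaternionic Beltrami equation Du = ((1 − f²)/(1 + f²))·D(star u) on Ω. -/
open MeasureTheory

noncomputable section

/-- The quaternion unit `i`. -/
def qi : Quaternion ℝ := ⟨0, 1, 0, 0⟩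
/-- The quaternion unit `j`. -/
def qj : Quaternion ℝ := ⟨0, 0, 1, 0⟩
/-- The quaternion unit `k`. -/
def qk : Quaternion ℝ := ⟨0, 0, 0, 1⟩

/-- Partial derivative of a quaternion-valued function on `ℝ³`. -/
def pd (i : Fin 3) (w : (Fin 3 → ℝ) → Quaternion ℝ) (x : Fin 3 → ℝ) : Quaternion ℝ :=
  fderiv ℝ w x (Pi.single i 1)

/-- Partial derivative of a real-valued function on `ℝ³`. -/
def pdR (i : Fin 3) (u : (Fin 3 → ℝ) → ℝ) (x : Fin 3 → ℝ) : ℝ :=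
  fderiv ℝ u x (Pi.single i 1)

/-- Moisil–Teodorescu operator `Dw = i ∂₁ w + j ∂₂ w + k ∂₃ w`. -/
def Dq (w : (Fin 3 → ℝ) → Quaternion ℝ) (x : Fin 3 → ℝ) : Quaternion ℝ :=
  qi * pd 0 w x + qj * pd 1 w x + qk * pd 2 w x

/-- Gradient of a real-valued function, viewed as a pure quaternion. -/
def gradq (u : (Fin 3 → ℝ) → ℝ) (x : Fin 3 → ℝ) : Quaternion ℝ :=
  ⟨0, pdR 0 u x, pdR 1 u x, pdR 2 u x⟩

/-- Laplacian of a real-valued function on `ℝ³`. -/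
def lapl (u : (Fin 3 → ℝ) → ℝ) (x : Fin 3 → ℝ) : ℝ :=
  pdR 0 (pdR 0 u) x + pdR 1 (pdR 1 u) x + pdR 2 (pdR 2 u) x

/-- Vector (non-scalar) part of a quaternion. -/
def Vecq (q : Quaternion ℝ) : Quaternion ℝ := q - (q.re : Quaternion ℝ)

/-- Divergence of the vector part of a quaternion-valued function. -/
def divVec (α : (Fin 3 → ℝ) → Quaternion ℝ) (x : Fin 3 → ℝ) : ℝ :=
  pdR 0 (fun y => (α y).imI) x + pdR 1 (fun y => (α y).imJ) x + pdR 2 (fun y => (α y).imK) x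


/-! Splitting `u` into scalar and vector parts gives
`Du - ν D(star u) = (1 - ν) ∇(Sc u) + (1 + ν) D(Vec u)`. For `u = Sc w/(fg) + (f/g) Vec w` and
`ν = (1 - f²)/(1 + f²)`, the product rule turns the right-hand side into `2f/(g(1 + f²))` times
`Dw - (∇f/f) star w - (∇g/g) w`, and this factor does not vanish where `f, g > 0`. -/

variable {u v : (Fin 3 → ℝ) → Quaternion ℝ} {a b : (Fin 3 → ℝ) → ℝ}
  {x : Fin 3 → ℝ}

theorem star_eq_re_sub_Vecq (q : Quaternion ℝ) : star q = q.re - Vecq q := by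
  ext <;> simp [Vecq]

theorem mul_eq_re_smul_add_mul_Vecq (p q : Quaternion ℝ) : p * q = q.re • p + p * Vecq q := by
  rw [Vecq, mul_sub, Quaternion.mul_coe_eq_smul, add_sub_cancel]

theorem mul_star_eq_re_smul_sub_mul_Vecq (p q : Quaternion ℝ) :
    p * star q = q.re • p - p * Vecq q := by
  rw [star_eq_re_sub_Vecq, mul_sub, Quaternion.mul_coe_eq_smul]

theorem re_Vecq (q : Quaternion ℝ) : (Vecq q).re = 0 := by simp [Vecq]

theorem Quaternion.coe_eq_smul_one (r : ℝ) : (r : Quaternion ℝ) = r • 1 := by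
  rw [← Algebra.algebraMap_eq_smul_one, Quaternion.algebraMap_def]

theorem DifferentiableAt.div_of_ne_zero {𝕜 E : Type*} [NontriviallyNormedField 𝕜]
    [NormedAddCommGroup E] [NormedSpace 𝕜 E] {a b : E → 𝕜} {x : E}
    (ha : DifferentiableAt 𝕜 a x) (hb : DifferentiableAt 𝕜 b x) (hb0 : b x ≠ 0) :
    DifferentiableAt 𝕜 (fun y => a y / b y) x := by
  simp only [div_eq_mul_inv]
  exact ha.mul (hb.fun_inv hb0)

theorem DifferentiableAt.quaternion_re (hu : DifferentiableAt ℝ u x) :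
    DifferentiableAt ℝ (fun y => (u y).re) x :=
  ((show Quaternion ℝ →ₗ[ℝ] ℝ from QuaternionAlgebra.reₗ _ _ _).toContinuousLinearMap
    |>.differentiableAt).comp x hu

theorem DifferentiableAt.quaternion_coe (ha : DifferentiableAt ℝ a x) :
    DifferentiableAt ℝ (fun y => (a y : Quaternion ℝ)) x := by
  simpa only [Quaternion.coe_eq_smul_one] using ha.smul_const (1 : Quaternion ℝ)

theorem DifferentiableAt.Vecq (hu : DifferentiableAt ℝ u x) :
    DifferentiableAt ℝ (fun y => Vecq (u y)) x :=
  hu.sub hu.quaternion_re.quaternion_coe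

@[simp] theorem re_gradq : (gradq a x).re = 0 := rfl
@[simp] theorem imI_gradq : (gradq a x).imI = pdR 0 a x := rfl
@[simp] theorem imJ_gradq : (gradq a x).imJ = pdR 1 a x := rfl
@[simp] theorem imK_gradq : (gradq a x).imK = pdR 2 a x := rfl

theorem gradq_eq_sum (a : (Fin 3 → ℝ) → ℝ) (x : Fin 3 → ℝ) :
    gradq a x = pdR 0 a x • qi + pdR 1 a x • qj + pdR 2 a x • qk := by
  ext <;> simp <;> simp [qi, qj, qk]

theorem gradq_mul (ha : DifferentiableAt ℝ a x) (hb : DifferentiableAt ℝ b x) :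
    gradq (fun y => a y * b y) x = a x • gradq b x + b x • gradq a x := by
  ext <;> simp [pdR, fderiv_fun_mul ha hb]

theorem gradq_inv (ha : DifferentiableAt ℝ a x) (ha0 : a x ≠ 0) :
    gradq (fun y => (a y)⁻¹) x = -(a x ^ 2)⁻¹ • gradq a x := by
  have h : fderiv ℝ (fun y => (a y)⁻¹) x =
      (fderiv ℝ (fun r : ℝ => r⁻¹) (a x)).comp (fderiv ℝ a x) :=
    fderiv_comp x (differentiableAt_inv ha0) ha
  ext <;> simp [pdR, h, fderiv_inv, mul_comm]

theorem gradq_div (ha : DifferentiableAt ℝ a x) (hb : DifferentiableAt ℝ b x)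
    (hb0 : b x ≠ 0) :
    gradq (fun y => a y / b y) x = (b x)⁻¹ • gradq a x - (a x / b x ^ 2) • gradq b x := by
  simp only [div_eq_mul_inv]
  rw [gradq_mul ha (hb.fun_inv hb0), gradq_inv hb hb0, smul_smul]
  module

theorem Dq_sub (hu : DifferentiableAt ℝ u x) (hv : DifferentiableAt ℝ v x) :
    Dq (fun y => u y - v y) x = Dq u x - Dq v x := by
  simp only [Dq, pd, fderiv_fun_sub hu hv, sub_apply, mul_sub]
  abel

theorem Dq_smul (ha : DifferentiableAt ℝ a x) (hu : DifferentiableAt ℝ u x) :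
    Dq (fun y => a y • u y) x = a x • Dq u x + gradq a x * u x := by
  simp only [Dq, pd, gradq_eq_sum, pdR, fderiv_fun_smul ha hu, add_apply,
    smul_apply, ContinuousLinearMap.smulRight_apply, mul_add, add_mul,
    mul_smul_comm, smul_mul_assoc]
  module

theorem Dq_coe (ha : DifferentiableAt ℝ a x) :
    Dq (fun y => (a y : Quaternion ℝ)) x = gradq a x := by
  simp only [Quaternion.coe_eq_smul_one, Dq, pd, gradq_eq_sum, pdR, fderiv_smul_const ha,
    ContinuousLinearMap.smulRight_apply, mul_smul_comm, mul_one]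

theorem Dq_eq_gradq_re_add_Dq_Vecq (hu : DifferentiableAt ℝ u x) :
    Dq u x = gradq (fun y => (u y).re) x + Dq (fun y => Vecq (u y)) x := by
  have h := Dq_sub hu hu.quaternion_re.quaternion_coe
  rw [Dq_coe hu.quaternion_re] at h
  rw [show (fun y => Vecq (u y)) = fun y => u y - (u y).re from rfl, h, add_sub_cancel]

theorem Dq_star (hu : DifferentiableAt ℝ u x) :
    Dq (fun y => star (u y)) x =
      gradq (fun y => (u y).re) x - Dq (fun y => Vecq (u y)) x := by
  simp only [star_eq_re_sub_Vecq]
  rw [Dq_sub hu.quaternion_re.quaternion_coe hu.Vecq, Dq_coe hu.quaternion_re]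

theorem Dq_sub_smul_Dq_star (ν : ℝ) (hu : DifferentiableAt ℝ u x) :
    Dq u x - ν • Dq (fun y => star (u y)) x =
      (1 - ν) • gradq (fun y => (u y).re) x + (1 + ν) • Dq (fun y => Vecq (u y)) x := by
  rw [Dq_star hu, Dq_eq_gradq_re_add_Dq_Vecq hu]
  module

def vekuaTransform (f g : (Fin 3 → ℝ) → ℝ) (w : (Fin 3 → ℝ) → Quaternion ℝ)
    (y : Fin 3 → ℝ) : Quaternion ℝ :=
  (((w y).re / (f y * g y) : ℝ) : Quaternion ℝ) + (f y / g y) • Vecq (w y)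

section

variable {f g : (Fin 3 → ℝ) → ℝ} {w : (Fin 3 → ℝ) → Quaternion ℝ}

theorem re_vekuaTransform (y : Fin 3 → ℝ) :
    (vekuaTransform f g w y).re = (w y).re / (f y * g y) := by
  simp only [vekuaTransform, Quaternion.re_add, Quaternion.re_coe, Quaternion.re_smul, re_Vecq,
    smul_zero, add_zero]

theorem Vecq_vekuaTransform (y : Fin 3 → ℝ) :
    Vecq (vekuaTransform f g w y) = (f y / g y) • Vecq (w y) := by
  rw [Vecq, re_vekuaTransform, vekuaTransform, add_sub_cancel_left]

theorem DifferentiableAt.vekuaTransform (hf : DifferentiableAt ℝ f x)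
    (hg : DifferentiableAt ℝ g x) (hw : DifferentiableAt ℝ w x) (hf0 : f x ≠ 0)
    (hg0 : g x ≠ 0) :
    DifferentiableAt ℝ (vekuaTransform f g w) x :=
  (hw.quaternion_re.div_of_ne_zero (hf.fun_mul hg) (mul_ne_zero hf0 hg0)).quaternion_coe.add
    ((hf.div_of_ne_zero hg hg0).smul hw.Vecq)

theorem Dq_vekuaTransform_sub_smul_Dq_star (hf : DifferentiableAt ℝ f x)
    (hg : DifferentiableAt ℝ g x) (hw : DifferentiableAt ℝ w x) (hf0 : f x ≠ 0)
    (hg0 : g x ≠ 0) :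
    Dq (vekuaTransform f g w) x -
        ((1 - f x ^ 2) / (1 + f x ^ 2)) • Dq (fun y => star (vekuaTransform f g w y)) x =
      (2 * f x / (g x * (1 + f x ^ 2))) •
        (Dq w x - ((f x)⁻¹ • (gradq f x * star (w x)) +
          (g x)⁻¹ • (gradq g x * w x))) := by
  rw [Dq_sub_smul_Dq_star _ (hf.vekuaTransform hg hw hf0 hg0)]
  simp only [re_vekuaTransform, Vecq_vekuaTransform]
  rw [Dq_smul (hf.div_of_ne_zero hg hg0) hw.Vecq, gradq_div hf hg hg0,
    gradq_div hw.quaternion_re (hf.fun_mul hg) (mul_ne_zero hf0 hg0), gradq_mul hf hg,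
    Dq_eq_gradq_re_add_Dq_Vecq hw, mul_star_eq_re_smul_sub_mul_Vecq,
    mul_eq_re_smul_add_mul_Vecq (gradq g x) (w x)]
  simp only [sub_mul, smul_mul_assoc]
  match_scalars <;> field_simp <;> ring

end

theorem vekua_iff_beltrami_general (Ω : Set (Fin 3 → ℝ))
    (f g : (Fin 3 → ℝ) → ℝ) (w : (Fin 3 → ℝ) → Quaternion ℝ)
    (hf : ∀ x ∈ Ω, DifferentiableAt ℝ f x) (hg : ∀ x ∈ Ω, DifferentiableAt ℝ g x)
    (hfpos : ∀ x ∈ Ω, 0 < f x) (hgpos : ∀ x ∈ Ω, 0 < g x)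
    (hw : ∀ x ∈ Ω, DifferentiableAt ℝ w x) :
    (∀ x ∈ Ω, Dq w x =
        (f x)⁻¹ • (gradq f x * star (w x)) + (g x)⁻¹ • (gradq g x * w x)) ↔
    (∀ x ∈ Ω,
        Dq (fun y => (((w y).re / (f y * g y) : ℝ) : Quaternion ℝ)
              + (f y / g y) • Vecq (w y)) x =
          ((1 - f x ^ 2) / (1 + f x ^ 2)) •
            Dq (fun y => star ((((w y).re / (f y * g y) : ℝ) : Quaternion ℝ)
              + (f y / g y) • Vecq (w y))) x) := by
  refine forall₂_congr fun x hx => ?_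
  have hf0 : f x ≠ 0 := (hfpos x hx).ne'
  have hg0 : g x ≠ 0 := (hgpos x hx).ne'
  have hc : 2 * f x / (g x * (1 + f x ^ 2)) ≠ 0 :=
    div_ne_zero (mul_ne_zero two_ne_zero hf0) (mul_ne_zero hg0 (by positivity))
  change _ ↔ Dq (vekuaTransform f g w) x =
    ((1 - f x ^ 2) / (1 + f x ^ 2)) • Dq (fun y => star (vekuaTransform f g w y)) x
  rw [← sub_eq_zero, ← sub_eq_zero (a := Dq (vekuaTransform f g w) x),
    Dq_vekuaTransform_sub_smul_Dq_star (hf x hx) (hg x hx) (hw x hx) hf0 hg0,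
    smul_eq_zero_iff_right hc]

/-- equivalence of the quaternionic Vekua equation
`Dw = (∇f/f)·star w + (∇g/g)·w` with the quaternionic Beltrami equation for
`u = Sc w/(fg) + (f/g)·Vec w`. -/
theorem vekua_iff_beltrami (Ω : Set (Fin 3 → ℝ)) (hΩ : IsOpen Ω)
    (f g : (Fin 3 → ℝ) → ℝ) (w : (Fin 3 → ℝ) → Quaternion ℝ)
    (hf : ∀ x ∈ Ω, DifferentiableAt ℝ f x) (hg : ∀ x ∈ Ω, DifferentiableAt ℝ g x)
    (hfpos : ∀ x ∈ Ω, 0 < f x) (hgpos : ∀ x ∈ Ω, 0 < g x)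
    (hw : ∀ x ∈ Ω, DifferentiableAt ℝ w x) :
    (∀ x ∈ Ω, Dq w x =
        (f x)⁻¹ • (gradq f x * star (w x)) + (g x)⁻¹ • (gradq g x * w x)) ↔
    (∀ x ∈ Ω,
        Dq (fun y => (((w y).re / (f y * g y) : ℝ) : Quaternion ℝ)
              + (f y / g y) • Vecq (w y)) x =
          ((1 - f x ^ 2) / (1 + f x ^ 2)) •
            Dq (fun y => star ((((w y).re / (f y * g y) : ℝ) : Quaternion ℝ)
              + (f y / g y) • Vecq (w y))) x) :=
  vekua_iff_beltrami_general Ω f g w hf hg hfpos hgpos hw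

end
end

section
/- Let Ω ⊆ ℝ³ be open, let f, g : Ω → ℝ be twice continuously differentiable with f > 0 and g > 0 on Ω, and let w : Ω → ℍ be twice continuously differentiable. If w satisfies Dw = (∇f/f)·star(w) + (∇g/g)·w on Ω, then the scalar function Sc(w)/(f·g) satisfies the conductivity equation div( f²·∇( Sc(w)/(f·g) ) ) = 0 on Ω. -/
/-!
Write `w = u + v` with `u = Sc w`. The vector part of the Vekua equation reads
`∇u + curl v = u ∇log(fg) + ∇log(g/f) × v`, so
`f² ∇(u/(fg)) = (f/g) (∇u - u ∇log(fg)) = -((f/g) curl v + ∇(f/g) × v) = -curl((f/g) v)`.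
The flux of the conductivity equation is therefore a curl, and the divergence of a `C²` curl
vanishes by the symmetry of second derivatives.
-/

open MeasureTheory

noncomputable section

open Filter Topology

section PartialDerivatives

variable {φ ψ : (Fin 3 → ℝ) → ℝ} {x : Fin 3 → ℝ} {i : Fin 3}

theorem pdR_mul (hφ : DifferentiableAt ℝ φ x) (hψ : DifferentiableAt ℝ ψ x) :
    pdR i (fun y => φ y * ψ y) x = pdR i φ x * ψ x + φ x * pdR i ψ x := by
  simp only [pdR, fderiv_fun_mul hφ hψ, add_apply, smul_apply, smul_eq_mul]
  ring

theorem pdR_inv (hφ : DifferentiableAt ℝ φ x) (hφ₀ : φ x ≠ 0) :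
    pdR i (fun y => (φ y)⁻¹) x = -pdR i φ x / φ x ^ 2 := by
  rw [pdR, fderiv_fun_comp x (differentiableAt_inv hφ₀) hφ, fderiv_inv]
  simp [pdR, div_eq_mul_inv, mul_comm]

theorem pdR_div (hφ : DifferentiableAt ℝ φ x) (hψ : DifferentiableAt ℝ ψ x) (hψ₀ : ψ x ≠ 0) :
    pdR i (fun y => φ y / ψ y) x = (pdR i φ x * ψ x - φ x * pdR i ψ x) / ψ x ^ 2 := by
  have h := pdR_mul (i := i) (ψ := fun y => (ψ y)⁻¹) hφ (hψ.inv hψ₀)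
  simp only [pdR_inv hψ hψ₀, ← div_eq_mul_inv] at h
  rw [h]
  field_simp
  ring

theorem pdR_neg : pdR i (fun y => -φ y) x = -pdR i φ x := by
  simp [pdR, fderiv_fun_neg]

theorem pdR_sub (hφ : DifferentiableAt ℝ φ x) (hψ : DifferentiableAt ℝ ψ x) :
    pdR i (fun y => φ y - ψ y) x = pdR i φ x - pdR i ψ x := by
  simp [pdR, fderiv_fun_sub hφ hψ]

theorem contDiffAt_pdR {n : WithTop ℕ∞} (hφ : ContDiffAt ℝ (n + 1) φ x) :
    ContDiffAt ℝ n (pdR i φ) x :=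
  show ContDiffAt ℝ n (ContinuousLinearMap.apply ℝ ℝ (Pi.single i 1) ∘ fderiv ℝ φ) x from
    (ContinuousLinearMap.apply ℝ ℝ _).contDiff.contDiffAt.comp x (hφ.fderiv_right le_rfl)

theorem pdR_comm (hφ : ContDiffAt ℝ 2 φ x) (i j : Fin 3) :
    pdR i (pdR j φ) x = pdR j (pdR i φ) x := by
  have h2 : DifferentiableAt ℝ (fderiv ℝ φ) x :=
    (hφ.fderiv_right (m := 1) le_rfl).differentiableAt one_ne_zero
  have hsecond (a b : Fin 3) :
      pdR a (pdR b φ) x = fderiv ℝ (fderiv ℝ φ) x (Pi.single a 1) (Pi.single b 1) := by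
    change fderiv ℝ (fun y => fderiv ℝ φ y (Pi.single b 1)) x (Pi.single a 1) = _
    simp [fderiv_clm_apply h2 (differentiableAt_const _)]
  rw [hsecond, hsecond, hφ.isSymmSndFDerivAt (by simp)]

theorem Filter.EventuallyEq.pdR_eq (h : φ =ᶠ[𝓝 x] ψ) (i : Fin 3) : pdR i φ x = pdR i ψ x := by
  rw [pdR, pdR, h.fderiv_eq]

end PartialDerivatives

def curlVec (α : (Fin 3 → ℝ) → Quaternion ℝ) (x : Fin 3 → ℝ) : Quaternion ℝ :=
  ⟨0, pdR 1 (fun y => (α y).imK) x - pdR 2 (fun y => (α y).imJ) x,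
    pdR 2 (fun y => (α y).imI) x - pdR 0 (fun y => (α y).imK) x,
    pdR 0 (fun y => (α y).imJ) x - pdR 1 (fun y => (α y).imI) x⟩

section QuaternionFields

variable {w α β : (Fin 3 → ℝ) → Quaternion ℝ} {x : Fin 3 → ℝ}

theorem pdR_clm_comp (L : Quaternion ℝ →L[ℝ] ℝ) (hw : DifferentiableAt ℝ w x) (i : Fin 3) :
    pdR i (fun y => L (w y)) x = L (pd i w x) := by
  simp [pdR, pd, fderiv_fun_comp x L.differentiableAt hw]

theorem pd_eq_mk (hw : DifferentiableAt ℝ w x) (i : Fin 3) :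
    pd i w x = ⟨pdR i (fun y => (w y).re) x, pdR i (fun y => (w y).imI) x,
      pdR i (fun y => (w y).imJ) x, pdR i (fun y => (w y).imK) x⟩ := by
  ext
  · exact (pdR_clm_comp (QuaternionAlgebra.reₗ ..).toContinuousLinearMap hw i).symm
  · exact (pdR_clm_comp (QuaternionAlgebra.imIₗ ..).toContinuousLinearMap hw i).symm
  · exact (pdR_clm_comp (QuaternionAlgebra.imJₗ ..).toContinuousLinearMap hw i).symm
  · exact (pdR_clm_comp (QuaternionAlgebra.imKₗ ..).toContinuousLinearMap hw i).symm

theorem Dq_eq_gradq_add_curlVec_sub_divVec (hw : DifferentiableAt ℝ w x) :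
    Dq w x = gradq (fun y => (w y).re) x + curlVec w x - (divVec w x : Quaternion ℝ) := by
  rw [Quaternion.ext_iff]
  simp only [Dq, Quaternion.re_add, Quaternion.re_mul, Quaternion.imI_add, Quaternion.imI_mul,
    Quaternion.imJ_add, Quaternion.imJ_mul, Quaternion.imK_add, Quaternion.imK_mul,
    Quaternion.re_sub, Quaternion.imI_sub, Quaternion.imJ_sub, Quaternion.imK_sub,
    Quaternion.re_coe, Quaternion.imI_coe, Quaternion.imJ_coe, Quaternion.imK_coe]
  simp only [pd_eq_mk hw, qi, qj, qk, gradq, curlVec, divVec]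
  refine ⟨?_, ?_, ?_, ?_⟩ <;> ring

theorem divVec_curlVec (hα : ContDiffAt ℝ 2 α x) : divVec (curlVec α) x = 0 := by
  have hc (L : Quaternion ℝ →ₗ[ℝ] ℝ) : ContDiffAt ℝ 2 (fun y => L (α y)) x :=
    L.toContinuousLinearMap.contDiff.contDiffAt.comp x hα
  have hI : ContDiffAt ℝ 2 (fun y => (α y).imI) x := hc (QuaternionAlgebra.imIₗ ..)
  have hJ : ContDiffAt ℝ 2 (fun y => (α y).imJ) x := hc (QuaternionAlgebra.imJₗ ..)
  have hK : ContDiffAt ℝ 2 (fun y => (α y).imK) x := hc (QuaternionAlgebra.imKₗ ..)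
  have hd {φ : (Fin 3 → ℝ) → ℝ} (hφ : ContDiffAt ℝ 2 φ x) (j : Fin 3) :
      DifferentiableAt ℝ (pdR j φ) x :=
    (contDiffAt_pdR (n := 1) hφ).differentiableAt one_ne_zero
  simp only [divVec, curlVec]
  rw [pdR_sub (hd hK 1) (hd hJ 2), pdR_sub (hd hI 2) (hd hK 0), pdR_sub (hd hJ 0) (hd hI 1),
    pdR_comm hK 0 1, pdR_comm hJ 0 2, pdR_comm hI 1 2]
  ring

theorem Filter.EventuallyEq.divVec_eq (h : α =ᶠ[𝓝 x] β) : divVec α x = divVec β x := by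
  have hc (L : Quaternion ℝ → ℝ) (i : Fin 3) :
      pdR i (fun y => L (α y)) x = pdR i (fun y => L (β y)) x :=
    (h.fun_comp L).pdR_eq i
  rw [divVec, divVec, hc QuaternionAlgebra.imI, hc QuaternionAlgebra.imJ, hc QuaternionAlgebra.imK]

theorem divVec_neg : divVec (fun y => -α y) x = -divVec α x := by
  simp only [divVec, Quaternion.imI_neg, Quaternion.imJ_neg, Quaternion.imK_neg, pdR_neg]
  ring

theorem divVec_smul_gradq (c u : (Fin 3 → ℝ) → ℝ) :
    divVec (fun y => c y • gradq u y) x = ∑ i : Fin 3, pdR i (fun y => c y * pdR i u y) x := by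
  simp only [divVec, Quaternion.imI_smul, Quaternion.imJ_smul, Quaternion.imK_smul, smul_eq_mul]
  simp [gradq, Fin.sum_univ_three]

end QuaternionFields

theorem sq_smul_gradq_div_eq_neg_curlVec_of_vekua {f g : (Fin 3 → ℝ) → ℝ}
    {w : (Fin 3 → ℝ) → Quaternion ℝ} {x : Fin 3 → ℝ}
    (hf : DifferentiableAt ℝ f x) (hg : DifferentiableAt ℝ g x) (hw : DifferentiableAt ℝ w x)
    (hf₀ : f x ≠ 0) (hg₀ : g x ≠ 0)
    (hV : Dq w x = (f x)⁻¹ • (gradq f x * star (w x)) + (g x)⁻¹ • (gradq g x * w x)) :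
    f x ^ 2 • gradq (fun y => (w y).re / (f y * g y)) x =
      -curlVec (fun y => (f y / g y) • w y) x := by
  have hc (L : Quaternion ℝ →ₗ[ℝ] ℝ) : DifferentiableAt ℝ (fun y => L (w y)) x :=
    L.toContinuousLinearMap.differentiableAt.comp x hw
  have hR : DifferentiableAt ℝ (fun y => (w y).re) x := hc (QuaternionAlgebra.reₗ ..)
  have hI : DifferentiableAt ℝ (fun y => (w y).imI) x := hc (QuaternionAlgebra.imIₗ ..)
  have hJ : DifferentiableAt ℝ (fun y => (w y).imJ) x := hc (QuaternionAlgebra.imJₗ ..)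
  have hK : DifferentiableAt ℝ (fun y => (w y).imK) x := hc (QuaternionAlgebra.imKₗ ..)
  have hfg₀ : f x * g x ≠ 0 := mul_ne_zero hf₀ hg₀
  rw [Dq_eq_gradq_add_curlVec_sub_divVec hw, Quaternion.ext_iff] at hV
  rw [Quaternion.ext_iff]
  simp only [Quaternion.re_add, Quaternion.re_mul, Quaternion.imI_add, Quaternion.imI_mul,
    Quaternion.imJ_add, Quaternion.imJ_mul, Quaternion.imK_add, Quaternion.imK_mul,
    Quaternion.re_sub, Quaternion.imI_sub, Quaternion.imJ_sub, Quaternion.imK_sub,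
    Quaternion.re_coe, Quaternion.imI_coe, Quaternion.imJ_coe, Quaternion.imK_coe,
    Quaternion.re_neg, Quaternion.imI_neg, Quaternion.imJ_neg, Quaternion.imK_neg,
    Quaternion.re_smul, Quaternion.imI_smul, Quaternion.imJ_smul, Quaternion.imK_smul,
    Quaternion.re_star, Quaternion.imI_star, Quaternion.imJ_star, Quaternion.imK_star,
    smul_eq_mul] at hV ⊢
  simp only [gradq, curlVec] at hV ⊢
  simp only [Quaternion.imI_smul, Quaternion.imJ_smul, Quaternion.imK_smul, smul_eq_mul]
  simp (disch := first | assumption | fun_prop (disch := assumption)) only [pdR_mul, pdR_div]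
  obtain ⟨-, hVI, hVJ, hVK⟩ := hV
  refine ⟨by simp, ?_, ?_, ?_⟩
  -- each component of the difference of the two sides is `f/g` times that of the Vekua equation
  · linear_combination (norm := (field_simp; ring)) (f x / g x) * hVI
  · linear_combination (norm := (field_simp; ring)) (f x / g x) * hVJ
  · linear_combination (norm := (field_simp; ring)) (f x / g x) * hVK

/-- if `w` solves the Vekua equation `Dw = (∇f/f)·star w + (∇g/g)·w`,
then `Sc w/(fg)` solves the conductivity equation `div(f²∇(Sc w/(fg))) = 0`. -/
theorem vekua_implies_conductivity (Ω : Set (Fin 3 → ℝ)) (hΩ : IsOpen Ω)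
    (f g : (Fin 3 → ℝ) → ℝ) (w : (Fin 3 → ℝ) → Quaternion ℝ)
    (hf : ContDiffOn ℝ 2 f Ω) (hg : ContDiffOn ℝ 2 g Ω)
    (hfpos : ∀ x ∈ Ω, 0 < f x) (hgpos : ∀ x ∈ Ω, 0 < g x)
    (hw : ContDiffOn ℝ 2 w Ω)
    (hVekua : ∀ x ∈ Ω, Dq w x =
        (f x)⁻¹ • (gradq f x * star (w x)) + (g x)⁻¹ • (gradq g x * w x)) :
    ∀ x ∈ Ω,
      ∑ i : Fin 3,
        pdR i (fun y => f y ^ 2 * pdR i (fun z => (w z).re / (f z * g z)) y) x = 0 := by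
  intro x hx
  have hΩx := hΩ.mem_nhds hx
  have hflux : (fun y => f y ^ 2 • gradq (fun z => (w z).re / (f z * g z)) y) =ᶠ[𝓝 x]
      fun y => -curlVec (fun z => (f z / g z) • w z) y := by
    filter_upwards [hΩx] with y hy
    have hΩy := hΩ.mem_nhds hy
    exact sq_smul_gradq_div_eq_neg_curlVec_of_vekua
      ((hf.contDiffAt hΩy).differentiableAt two_ne_zero)
      ((hg.contDiffAt hΩy).differentiableAt two_ne_zero)
      ((hw.contDiffAt hΩy).differentiableAt two_ne_zero)
      (hfpos y hy).ne' (hgpos y hy).ne' (hVekua y hy)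
  have hsmooth : ContDiffAt ℝ 2 (fun y => (f y / g y) • w y) x :=
    ((hf.contDiffAt hΩx).div (hg.contDiffAt hΩx) (hgpos x hx).ne').smul (hw.contDiffAt hΩx)
  rw [← divVec_smul_gradq, hflux.divVec_eq, divVec_neg, divVec_curlVec hsmooth, neg_zero]

end
end

section
/- Let Ω ⊆ ℝ³ be open and let f : Ω → ℝ be twice continuously differentiable with f > 0 on Ω, and set α := ∇f/f (a pure-quaternion-valued function on Ω). Then α satisfies the Vekua equation Dα = α·star(α) on Ω if and only if Δf = 0 on Ω. -/
open MeasureTheory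

noncomputable section

/-! `α = ∇f/f` is the gradient of `log f` (near every point, since `f ≠ 0` there). For a `C²`
function `u` one has `D(∇u) = -Δu`: the vector part of `D(∇u)` is `curl ∇u`, which vanishes by
symmetry of the Hessian. Moreover `Δ log f = Δf/f - |∇f/f|²` and `α · star α = |α|²`, so
`Dα = α · star α - Δf/f`, and the Vekua equation holds exactly where `Δf = 0`. -/

open Filter Topology Quaternion

@[simp] theorem qi_re : qi.re = 0 := rfl
@[simp] theorem qi_imI : qi.imI = 1 := rfl
@[simp] theorem qi_imJ : qi.imJ = 0 := rfl
@[simp] theorem qi_imK : qi.imK = 0 := rfl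
@[simp] theorem qj_re : qj.re = 0 := rfl
@[simp] theorem qj_imI : qj.imI = 0 := rfl
@[simp] theorem qj_imJ : qj.imJ = 1 := rfl
@[simp] theorem qj_imK : qj.imK = 0 := rfl
@[simp] theorem qk_re : qk.re = 0 := rfl
@[simp] theorem qk_imI : qk.imI = 0 := rfl
@[simp] theorem qk_imJ : qk.imJ = 0 := rfl
@[simp] theorem qk_imK : qk.imK = 1 := rfl

section Gradient

variable (u : (Fin 3 → ℝ) → ℝ) (x : Fin 3 → ℝ)

@[simp] theorem gradq_re : (gradq u x).re = 0 := rfl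
@[simp] theorem gradq_imI : (gradq u x).imI = pdR 0 u x := rfl
@[simp] theorem gradq_imJ : (gradq u x).imJ = pdR 1 u x := rfl
@[simp] theorem gradq_imK : (gradq u x).imK = pdR 2 u x := rfl

theorem gradq_eq_smul_add :
    gradq u = fun y => pdR 0 u y • qi + pdR 1 u y • qj + pdR 2 u y • qk := by
  funext y
  ext <;> simp [Quaternion.re_smul]

end Gradient

section PartialDerivatives

variable {u f : (Fin 3 → ℝ) → ℝ} {x : Fin 3 → ℝ}

theorem pdR_congr {v : (Fin 3 → ℝ) → ℝ} (h : u =ᶠ[𝓝 x] v) (i : Fin 3) :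
    pdR i u x = pdR i v x := by
  rw [pdR, pdR, h.fderiv_eq]

theorem pdR_pdR (hu : DifferentiableAt ℝ (fderiv ℝ u) x) (i j : Fin 3) :
    pdR i (pdR j u) x = fderiv ℝ (fderiv ℝ u) x (Pi.single i 1) (Pi.single j 1) := by
  change fderiv ℝ (fun y => fderiv ℝ u y (Pi.single j 1)) x _ = _
  rw [fderiv_clm_apply hu (differentiableAt_const _)]
  simp

theorem ContDiffAt.differentiableAt_fderiv (hu : ContDiffAt ℝ 2 u x) :
    DifferentiableAt ℝ (fderiv ℝ u) x :=
  (hu.fderiv_right (m := 1) (by norm_num)).differentiableAt (by norm_num)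

theorem ContDiffAt.differentiableAt_pdR (hu : ContDiffAt ℝ 2 u x) (i : Fin 3) :
    DifferentiableAt ℝ (pdR i u) x :=
  hu.differentiableAt_fderiv.clm_apply (differentiableAt_const _)

theorem pdR_pdR_comm (hu : ContDiffAt ℝ 2 u x) (i j : Fin 3) :
    pdR i (pdR j u) x = pdR j (pdR i u) x := by
  rw [pdR_pdR hu.differentiableAt_fderiv, pdR_pdR hu.differentiableAt_fderiv]
  exact hu.isSymmSndFDerivAt (by simp) _ _

theorem pdR_log (hf : DifferentiableAt ℝ f x) (hx : f x ≠ 0) (i : Fin 3) :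
    pdR i (fun y => Real.log (f y)) x = (f x)⁻¹ * pdR i f x := by
  simp [pdR, fderiv.log hf hx]

theorem pdR_inv_mul {g : (Fin 3 → ℝ) → ℝ} (hf : DifferentiableAt ℝ f x) (hx : f x ≠ 0)
    (hg : DifferentiableAt ℝ g x) (i : Fin 3) :
    pdR i (fun y => (f y)⁻¹ * g y) x = (f x)⁻¹ * pdR i g x - (f x)⁻¹ ^ 2 * pdR i f x * g x := by
  have hderiv : HasFDerivAt (fun y => (f y)⁻¹ * g y) _ x :=
    ((hasDerivAt_inv hx).comp_hasFDerivAt x hf.hasFDerivAt).mul hg.hasFDerivAt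
  simp only [pdR, hderiv.fderiv, Function.comp_apply, add_apply,
    smul_apply, smul_eq_mul, inv_pow]
  ring

theorem pd_smul_qi_add {a b c : (Fin 3 → ℝ) → ℝ} (ha : DifferentiableAt ℝ a x)
    (hb : DifferentiableAt ℝ b x) (hc : DifferentiableAt ℝ c x) (i : Fin 3) :
    pd i (fun y => a y • qi + b y • qj + c y • qk) x =
      pdR i a x • qi + pdR i b x • qj + pdR i c x • qk := by
  have hderiv : HasFDerivAt (fun y => a y • qi + b y • qj + c y • qk) _ x :=
    ((ha.hasFDerivAt.smul_const qi).add (hb.hasFDerivAt.smul_const qj)).add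
      (hc.hasFDerivAt.smul_const qk)
  simp [pd, pdR, hderiv.fderiv]

theorem Dq_congr {w v : (Fin 3 → ℝ) → ℍ} (h : w =ᶠ[𝓝 x] v) : Dq w x = Dq v x := by
  simp only [Dq, pd, h.fderiv_eq]

end PartialDerivatives

section Laplacian

variable {u f : (Fin 3 → ℝ) → ℝ} {x : Fin 3 → ℝ}

theorem Dq_gradq (hu : ContDiffAt ℝ 2 u x) : Dq (gradq u) x = -(lapl u x : ℍ) := by
  have hpd := pd_smul_qi_add (hu.differentiableAt_pdR 0) (hu.differentiableAt_pdR 1)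
    (hu.differentiableAt_pdR 2)
  rw [Dq, gradq_eq_smul_add, hpd, hpd, hpd]
  ext
  · simp only [re_add, re_mul, re_smul, imI_add, imI_smul, imJ_add, imJ_smul, imK_add, imK_smul,
      smul_eq_mul, qi_re, qi_imI, qi_imJ, qi_imK, qj_re, qj_imI,
      qj_imJ, qj_imK, qk_re, qk_imI, qk_imJ, qk_imK, lapl, re_neg, re_coe]
    ring
  all_goals simp [pdR_pdR_comm hu 1 2, pdR_pdR_comm hu 0 2, pdR_pdR_comm hu 0 1]

theorem ContDiffAt.eventually_differentiableAt_and_ne_zero (hf : ContDiffAt ℝ 2 f x)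
    (hx : f x ≠ 0) : ∀ᶠ y in 𝓝 x, DifferentiableAt ℝ f y ∧ f y ≠ 0 :=
  ((hf.eventually (by simp)).and (hf.continuousAt.eventually_ne hx)).mono
    fun _ hy => ⟨hy.1.differentiableAt (by simp), hy.2⟩

theorem gradq_log (hf : DifferentiableAt ℝ f x) (hx : f x ≠ 0) :
    gradq (fun y => Real.log (f y)) x = (f x)⁻¹ • gradq f x := by
  ext <;> simp [pdR_log hf hx, Quaternion.re_smul]

theorem lapl_log (hf : ContDiffAt ℝ 2 f x) (hx : f x ≠ 0) :
    lapl (fun y => Real.log (f y)) x = lapl f x / f x - normSq ((f x)⁻¹ • gradq f x) := by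
  have hlog (i : Fin 3) :
      pdR i (fun y => Real.log (f y)) =ᶠ[𝓝 x] fun y => (f y)⁻¹ * pdR i f y :=
    (hf.eventually_differentiableAt_and_ne_zero hx).mono fun _ hy => pdR_log hy.1 hy.2 i
  have hdf := hf.differentiableAt (by simp)
  simp only [lapl, pdR_congr (hlog _), pdR_inv_mul hdf hx (hf.differentiableAt_pdR _),
    normSq_def']
  simp only [re_smul, imI_smul, imJ_smul, imK_smul, gradq_re, gradq_imI, gradq_imJ, gradq_imK,
    smul_eq_mul]
  ring

theorem Dq_inv_smul_gradq (hf : ContDiffAt ℝ 2 f x) (hx : f x ≠ 0) :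
    Dq (fun y => (f y)⁻¹ • gradq f y) x =
      ((f x)⁻¹ • gradq f x) * star ((f x)⁻¹ • gradq f x) - (lapl f x / f x : ℝ) := by
  have hgrad : (fun y => (f y)⁻¹ • gradq f y) =ᶠ[𝓝 x] gradq (fun y => Real.log (f y)) :=
    (hf.eventually_differentiableAt_and_ne_zero hx).mono fun _ hy => (gradq_log hy.1 hy.2).symm
  rw [Dq_congr hgrad, Dq_gradq (hf.log hx), lapl_log hf hx, self_mul_star, ← coe_sub, ← coe_neg,
    neg_sub]

end Laplacian

/-- `α = ∇f/f` satisfies the Vekua equation `Dα = α·star α` on `Ω`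
iff `f` is harmonic on `Ω`. -/
theorem gradlog_vekua_iff_harmonic (Ω : Set (Fin 3 → ℝ)) (hΩ : IsOpen Ω)
    (f : (Fin 3 → ℝ) → ℝ) (hf : ContDiffOn ℝ 2 f Ω)
    (hfpos : ∀ x ∈ Ω, 0 < f x) :
    (∀ x ∈ Ω, Dq (fun y => (f y)⁻¹ • gradq f y) x =
        ((f x)⁻¹ • gradq f x) * star ((f x)⁻¹ • gradq f x)) ↔
    (∀ x ∈ Ω, lapl f x = 0) := by
  refine forall₂_congr fun x hx => ?_
  have hfx := (hfpos x hx).ne'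
  rw [Dq_inv_smul_gradq (hf.contDiffAt (hΩ.mem_nhds hx)) hfx, sub_eq_self, ← coe_zero, coe_inj,
    div_eq_zero_iff, or_iff_left hfx]

end
end

section
/- Let Ω ⊆ ℝ³ be open, let α, β : Ω → ℍ be continuous, let w : Ω → ℍ be continuously differentiable, and let h : Ω → ℍ be smooth with compact support contained in Ω. Then ∫_Ω Sc( star(w(x)) · ( Dh(x) − star(h(x))·α(x) − star(β(x))·h(x) ) ) dx = ∫_Ω Sc( star( Dw(x) − α(x)·star(w(x)) − β(x)·w(x) ) · h(x) ) dx. In other words, the operator D − M^α C − conj(β) is the formal adjoint of the Vekua operator D − αC − β with respect to the real pairing ⟨u,v⟩₀ = ∫ Sc(star(u)·v). -/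
open MeasureTheory

noncomputable section

set_option maxHeartbeats 1000000
set_option synthInstance.maxHeartbeats 1000000

/-- `star` on quaternions as a continuous `ℝ`-linear map. -/
def starCLM : Quaternion ℝ →L[ℝ] Quaternion ℝ :=
  LinearMap.toContinuousLinearMap
    { toFun := star
      map_add' := star_add
      map_smul' := fun r q => by
        apply QuaternionAlgebra.ext <;>
          simp [Quaternion.re_star, Quaternion.imI_star, Quaternion.imJ_star,
            Quaternion.imK_star] }

/-- `re` on quaternions as a continuous `ℝ`-linear map. -/
def reCLM : Quaternion ℝ →L[ℝ] ℝ :=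
  LinearMap.toContinuousLinearMap (QuaternionAlgebra.reₗ (-1 : ℝ) (0 : ℝ) (-1 : ℝ))

@[simp] lemma starCLM_apply (q : Quaternion ℝ) : starCLM q = star q := rfl
@[simp] lemma reCLM_apply (q : Quaternion ℝ) : reCLM q = q.re := rfl

/-- The auxiliary scalar field whose divergence realizes the difference of pairings. -/
def gfun (w h : (Fin 3 → ℝ) → Quaternion ℝ) (l : Fin 3) (y : Fin 3 → ℝ) : ℝ :=
  (star (w y) * (![qi, qj, qk] l * h y)).re

lemma quat_alg (a b p0 p1 p2 q0 q1 q2 A B : Quaternion ℝ) :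
    (star a * ((qi * q0 + qj * q1 + qk * q2) - star b * A - star B * b)).re
    = (star ((qi * p0 + qj * p1 + qk * p2) - A * star a - B * a) * b).re
      + (((star p0 * (qi * b)).re + (star a * (qi * q0)).re)
        + ((star p1 * (qj * b)).re + (star a * (qj * q1)).re)
        + ((star p2 * (qk * b)).re + (star a * (qk * q2)).re)) := by
  simp only [Quaternion.re_mul, Quaternion.re_sub, Quaternion.re_add,
    Quaternion.re_star, Quaternion.imI_star, Quaternion.imJ_star, Quaternion.imK_star,
    Quaternion.imI_mul, Quaternion.imJ_mul, Quaternion.imK_mul,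
    Quaternion.imI_sub, Quaternion.imJ_sub, Quaternion.imK_sub,
    Quaternion.imI_add, Quaternion.imJ_add, Quaternion.imK_add]
  simp only [qi, qj, qk]
  ring

lemma fderiv_g_apply (c : Quaternion ℝ) (w h : (Fin 3 → ℝ) → Quaternion ℝ) (x : Fin 3 → ℝ)
    (w' h' : (Fin 3 → ℝ) →L[ℝ] Quaternion ℝ)
    (hw : HasFDerivAt w w' x) (hh : HasFDerivAt h h' x) (v : Fin 3 → ℝ) :
    fderiv ℝ (fun y => (star (w y) * (c * h y)).re) x v
      = (star (w' v) * (c * h x)).re + (star (w x) * (c * h' v)).re := by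
  have hs : HasFDerivAt (fun y => star (w y)) (starCLM.comp w') x :=
    starCLM.hasFDerivAt.comp x hw
  have hch : HasFDerivAt (fun y => c * h y) (c • h') x := hh.const_mul c
  have hmul := hs.mul' hch
  have hre : HasFDerivAt (fun y => (star (w y) * (c * h y)).re)
      (reCLM.comp ((star (w x)) • (c • h') + MulOpposite.op (c * h x) • (starCLM.comp w'))) x :=
    reCLM.hasFDerivAt.comp x hmul
  rw [hre.fderiv]
  simp [mul_comm, smul_eq_mul, mul_assoc]
  ring

lemma key_div (g : (Fin 3 → ℝ) → ℝ) (hg : ContDiff ℝ 1 g) (hgs : HasCompactSupport g)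
    (l : Fin 3) : ∫ x : Fin 3 → ℝ, fderiv ℝ g x (Pi.single l 1) = 0 := by
  obtain ⟨r, hr⟩ := hgs.isBounded.subset_closedBall 0
  set R : ℝ := |r| + 1 with hR
  have hRpos : 0 < R := by positivity
  have hsub : tsupport g ⊆ Metric.closedBall 0 R :=
    hr.trans (Metric.closedBall_subset_closedBall (by simp [hR]; linarith [le_abs_self r]))
  set a : Fin 3 → ℝ := fun _ => -(R + 1) with ha
  set b : Fin 3 → ℝ := fun _ => R + 1 with hb
  have hle : a ≤ b := fun i => by simp [ha, hb]; linarith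
  have hgz : ∀ y : Fin 3 → ℝ, R < ‖y‖ → g y = 0 := by
    intro y hy
    apply image_eq_zero_of_notMem_tsupport
    intro hmem
    have := hsub hmem
    rw [Metric.mem_closedBall, dist_zero_right] at this
    linarith
  have hIccsub : ∀ y ∈ tsupport g, y ∈ Set.Icc a b := by
    intro y hy
    have hyR : ‖y‖ ≤ R := by
      have := hsub hy; rwa [Metric.mem_closedBall, dist_zero_right] at this
    constructor <;> intro i <;>
      have h1 : |y i| ≤ ‖y‖ := by
        simpa using norm_le_pi_norm y i
    · simp only [ha]; cases abs_le.mp h1; linarith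
    · simp only [hb]; cases abs_le.mp h1; linarith
  have key := MeasureTheory.integral_divergence_of_hasFDerivAt_off_countable'
    (n := 2) a b hle
    (fun i x => if i = l then g x else 0)
    (fun i x => if i = l then fderiv ℝ g x else 0)
    ∅ Set.countable_empty
    (fun i => by
      by_cases hil : i = l <;> simp [hil, hg.continuous.continuousOn, continuousOn_const])
    (fun x _ i => by
      by_cases hil : i = l
      · simpa [hil] using ((hg.differentiable one_ne_zero) x).hasFDerivAt
      · simpa [hil] using (hasFDerivAt_const (0 : ℝ) x))
    (by
      have hc : Continuous fun x : Fin 3 → ℝ => fderiv ℝ g x (Pi.single l 1) :=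
        (hg.continuous_fderiv one_ne_zero).clm_apply continuous_const
      have heq : (fun x : Fin 3 → ℝ => ∑ i : Fin 3,
          (if i = l then fderiv ℝ g x else 0) (Pi.single i 1)) =
          fun x => fderiv ℝ g x (Pi.single l 1) := by
        funext x
        fin_cases l <;> simp [Fin.sum_univ_three]
      rw [heq]
      exact hc.integrableOn_Icc)
  have hsum : ∀ x : Fin 3 → ℝ, (∑ i : Fin 3,
      (if i = l then fderiv ℝ g x else 0) (Pi.single i 1)) = fderiv ℝ g x (Pi.single l 1) := by
    intro x; fin_cases l <;> simp [Fin.sum_univ_three]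
  simp only [hsum] at key
  rw [MeasureTheory.setIntegral_eq_integral_of_forall_compl_eq_zero (by
    intro x hx
    have hxt : x ∉ tsupport g := fun hmem => hx (hIccsub x hmem)
    have h0 : fderiv ℝ g x = 0 := by
      by_contra hne
      exact hxt (support_fderiv_subset ℝ hne)
    simp [h0])] at key
  rw [key]
  apply Finset.sum_eq_zero
  intro i _
  have hface : ∀ (p : ℝ), R < |p| → ∀ y : Fin 2 → ℝ,
      (if i = l then g (i.insertNth p y) else 0) = 0 := by
    intro p hp y
    by_cases hil : i = l
    · subst hil
      simp only [if_true]
      apply hgz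
      have h1 : |(i.insertNth p y : Fin 3 → ℝ) i| ≤ ‖(i.insertNth p y : Fin 3 → ℝ)‖ := by
        simpa using norm_le_pi_norm (i.insertNth p y : Fin 3 → ℝ) i
      rw [Fin.insertNth_apply_same] at h1
      linarith
    · simp [hil]
  have hb' : R < |b i| := by simp only [hb]; rw [abs_of_pos] <;> linarith
  have ha' : R < |a i| := by simp only [ha]; rw [abs_of_neg] <;> linarith
  simp [hface (b i) hb', hface (a i) ha']


/-- `D − MᵅC − conj β` is the formal adjoint of the Vekua operator
`D − αC − β` with respect to the real pairing `⟨u,v⟩₀ = ∫ Sc(star(u)·v)`. -/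
theorem formal_adjoint (Ω : Set (Fin 3 → ℝ)) (hΩ : IsOpen Ω)
    (α β : (Fin 3 → ℝ) → Quaternion ℝ)
    (hα : ContinuousOn α Ω) (hβ : ContinuousOn β Ω)
    (w : (Fin 3 → ℝ) → Quaternion ℝ) (hw : ContDiffOn ℝ 1 w Ω)
    (h : (Fin 3 → ℝ) → Quaternion ℝ) (hh : ContDiff ℝ (⊤ : ℕ∞) h)
    (hsupp : HasCompactSupport h) (hsuppΩ : tsupport h ⊆ Ω) :
    ∫ x in Ω, (star (w x) *
        (Dq h x - star (h x) * α x - star (β x) * h x)).re =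
      ∫ x in Ω, (star (Dq w x - α x * star (w x) - β x * w x) * h x).re := by
  classical
  have hKc : IsCompact (tsupport h) := hsupp
  have hmeas : MeasurableSet Ω := hΩ.measurableSet
  have hh1 : ContDiff ℝ 1 h := hh.of_le (by simp)
  have hg0 : ∀ (l : Fin 3), ∀ x ∉ tsupport h, gfun w h l x = 0 := by
    intro l x hx
    simp [gfun, image_eq_zero_of_notMem_tsupport hx, Quaternion.re_zero]
  have hsuppg : ∀ l, Function.support (gfun w h l) ⊆ tsupport h := by
    intro l x hx
    by_contra hc
    exact hx (hg0 l x hc)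
  have hgs : ∀ l, HasCompactSupport (gfun w h l) := fun l => hsupp.mono' (hsuppg l)
  have hg1 : ∀ l, ContDiff ℝ 1 (gfun w h l) := by
    intro l
    rw [contDiff_iff_contDiffAt]
    intro x
    by_cases hx : x ∈ Ω
    · have hwx : ContDiffAt ℝ 1 w x := hw.contDiffAt (hΩ.mem_nhds hx)
      have hsx : ContDiffAt ℝ 1 (fun y => star (w y)) x :=
        starCLM.contDiff.contDiffAt.comp x hwx
      have hprod : ContDiffAt ℝ 1 (fun y => star (w y) * (![qi, qj, qk] l * h y)) x :=
        hsx.mul (contDiffAt_const.mul hh1.contDiffAt)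
      exact reCLM.contDiff.contDiffAt.comp x hprod
    · have hxK : x ∉ tsupport h := fun hmem => hx (hsuppΩ hmem)
      have hev : gfun w h l =ᶠ[nhds x] fun _ => (0 : ℝ) := by
        filter_upwards [(isClosed_tsupport h).isOpen_compl.mem_nhds hxK] with y hy
        exact hg0 l y hy
      exact (contDiffAt_const (c := (0 : ℝ))).congr_of_eventuallyEq hev
  -- pointwise identity on Ω
  have hpt : ∀ x ∈ Ω,
      (star (w x) * (Dq h x - star (h x) * α x - star (β x) * h x)).re =
      (star (Dq w x - α x * star (w x) - β x * w x) * h x).re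
        + (pdR 0 (gfun w h 0) x + pdR 1 (gfun w h 1) x + pdR 2 (gfun w h 2) x) := by
    intro x hx
    have hwd : HasFDerivAt w (fderiv ℝ w x) x :=
      (((hw.differentiableOn one_ne_zero) x hx).differentiableAt (hΩ.mem_nhds hx)).hasFDerivAt
    have hhd : HasFDerivAt h (fderiv ℝ h x) x := (hh1.differentiable one_ne_zero x).hasFDerivAt
    have e0 : pdR 0 (gfun w h 0) x
        = (star (fderiv ℝ w x (Pi.single 0 1)) * (qi * h x)).re
          + (star (w x) * (qi * fderiv ℝ h x (Pi.single 0 1))).re :=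
      fderiv_g_apply qi w h x _ _ hwd hhd (Pi.single 0 1)
    have e1 : pdR 1 (gfun w h 1) x
        = (star (fderiv ℝ w x (Pi.single 1 1)) * (qj * h x)).re
          + (star (w x) * (qj * fderiv ℝ h x (Pi.single 1 1))).re :=
      fderiv_g_apply qj w h x _ _ hwd hhd (Pi.single 1 1)
    have e2 : pdR 2 (gfun w h 2) x
        = (star (fderiv ℝ w x (Pi.single 2 1)) * (qk * h x)).re
          + (star (w x) * (qk * fderiv ℝ h x (Pi.single 2 1))).re :=
      fderiv_g_apply qk w h x _ _ hwd hhd (Pi.single 2 1)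
    rw [e0, e1, e2]
    simp only [Dq, pd]
    exact quat_alg (w x) (h x) _ _ _ _ _ _ (α x) (β x)
  -- continuity of the right-hand integrand on Ω
  have hwc : ContinuousOn w Ω := hw.continuousOn
  have hfdc : ContinuousOn (fderiv ℝ w) Ω := hw.continuousOn_fderiv_of_isOpen hΩ le_rfl
  have hpdc : ∀ l : Fin 3, ContinuousOn (fun x => pd l w x) Ω := fun l =>
    hfdc.clm_apply continuousOn_const
  have hDqc : ContinuousOn (fun x => Dq w x) Ω :=
    ((continuousOn_const.mul (hpdc 0)).add (continuousOn_const.mul (hpdc 1))).add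
      (continuousOn_const.mul (hpdc 2))
  have hRcont : ContinuousOn
      (fun x => (star (Dq w x - α x * star (w x) - β x * w x) * h x).re) Ω := by
    have hswc : ContinuousOn (fun x => star (w x)) Ω :=
      starCLM.continuous.comp_continuousOn hwc
    have hsub : ContinuousOn (fun x => Dq w x - α x * star (w x) - β x * w x) Ω :=
      (hDqc.sub (hα.mul hswc)).sub (hβ.mul hwc)
    have hst : ContinuousOn (fun x => star (Dq w x - α x * star (w x) - β x * w x)) Ω :=
      starCLM.continuous.comp_continuousOn hsub
    exact reCLM.continuous.comp_continuousOn (hst.mul hh.continuous.continuousOn)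
  have hRf0 : ∀ x ∉ tsupport h,
      (star (Dq w x - α x * star (w x) - β x * w x) * h x).re = 0 := by
    intro x hx
    simp [image_eq_zero_of_notMem_tsupport hx, Quaternion.re_zero]
  have hRint : MeasureTheory.IntegrableOn
      (fun x => (star (Dq w x - α x * star (w x) - β x * w x) * h x).re) Ω := by
    have hint1 : MeasureTheory.IntegrableOn
        (fun x => (star (Dq w x - α x * star (w x) - β x * w x) * h x).re) (tsupport h) :=
      (hRcont.mono hsuppΩ).integrableOn_compact hKc
    have hint2 : MeasureTheory.IntegrableOn
        (fun x => (star (Dq w x - α x * star (w x) - β x * w x) * h x).re)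
        (Ω \ tsupport h) :=
      MeasureTheory.integrableOn_zero.congr_fun (fun x hx => (hRf0 x hx.2).symm)
        (hmeas.diff (isClosed_tsupport h).measurableSet)
    exact (hint1.union hint2).mono_set (fun x hx => by
      by_cases hxK : x ∈ tsupport h
      · exact Or.inl hxK
      · exact Or.inr ⟨hx, hxK⟩)
  -- integrability of the divergence terms
  have hDint : ∀ l : Fin 3, MeasureTheory.Integrable (fun x => pdR l (gfun w h l) x) := by
    intro l
    have hc : Continuous (fun x => pdR l (gfun w h l) x) :=
      ((hg1 l).continuous_fderiv one_ne_zero).clm_apply continuous_const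
    have hsupp' : Function.support (fun x => pdR l (gfun w h l) x) ⊆
        tsupport (gfun w h l) := by
      intro x hx
      apply support_fderiv_subset ℝ
      intro h0
      apply hx
      simp [pdR, h0]
    exact hc.integrable_of_hasCompactSupport ((hgs l).mono' hsupp')
  have hzl : ∀ l : Fin 3, ∫ x in Ω, pdR l (gfun w h l) x = 0 := by
    intro l
    rw [MeasureTheory.setIntegral_eq_integral_of_forall_compl_eq_zero (fun x hx => ?_)]
    · exact key_div _ (hg1 l) (hgs l) l
    · have hxg : x ∉ tsupport (gfun w h l) := fun hmem =>
        hx (hsuppΩ (closure_minimal (hsuppg l) (isClosed_tsupport h) hmem))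
      have h0 : fderiv ℝ (gfun w h l) x = 0 := by
        by_contra hne
        exact hxg (support_fderiv_subset ℝ hne)
      simp [pdR, h0]
  rw [MeasureTheory.setIntegral_congr_fun hmeas (fun x hx => hpt x hx)]
  have hD01 : MeasureTheory.Integrable
      (fun x => pdR 0 (gfun w h 0) x + pdR 1 (gfun w h 1) x)
      (MeasureTheory.volume.restrict Ω) :=
    (hDint 0).integrableOn.add (hDint 1).integrableOn
  have hD012 : MeasureTheory.Integrable
      (fun x => pdR 0 (gfun w h 0) x + pdR 1 (gfun w h 1) x + pdR 2 (gfun w h 2) x)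
      (MeasureTheory.volume.restrict Ω) :=
    hD01.add (hDint 2).integrableOn
  rw [MeasureTheory.integral_add hRint hD012,
    MeasureTheory.integral_add hD01 (hDint 2).integrableOn,
    MeasureTheory.integral_add (hDint 0).integrableOn (hDint 1).integrableOn]
  rw [hzl 0, hzl 1, hzl 2]
  ring

end
end

section
/- Let Ω ⊆ ℝ³ be open, let β : Ω → ℍ be continuous, let w : Ω → ℍ be continuously differentiable, and let h : Ω → ℍ be smooth with compact support contained in Ω. Then the full quaternion-valued identity ∫_Ω star(w(x)) · ( Dh(x) − star(β(x))·h(x) ) dx = ∫_Ω star( Dw(x) − β(x)·w(x) ) · h(x) dx holds (equality in ℍ, not only of scalar parts). -/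
open MeasureTheory Set Manifold

noncomputable section

instance : StarModule ℝ (Quaternion ℝ) := ⟨fun r q => by ext <;> simp⟩
instance : ContinuousStar (Quaternion ℝ) := ⟨by
  have : (star : Quaternion ℝ → Quaternion ℝ) = fun q => ((2 * q.re : ℝ) : Quaternion ℝ) - q := by
    funext q; ext <;> simp [two_mul]
  rw [this]
  exact (Quaternion.continuous_coe.comp (continuous_const.mul Quaternion.continuous_re)).sub continuous_id⟩

lemma star_qi : star qi = -qi := by ext <;> simp <;> simp [qi]
lemma star_qj : star qj = -qj := by ext <;> simp <;> simp [qj]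
lemma star_qk : star qk = -qk := by ext <;> simp <;> simp [qk]

/-- integration by parts core -/
lemma ibp_core (W h : (Fin 3 → ℝ) → Quaternion ℝ) (hW : ContDiff ℝ 1 W)
    (hh : ContDiff ℝ 1 h) (hhc : HasCompactSupport h) (e : Quaternion ℝ) (he : star e = -e) (l : Fin 3) :
    ∫ x, star (W x) * (e * pd l h x) = ∫ x, star (e * pd l W x) * h x := by
  set v : Fin 3 → ℝ := Pi.single l 1 with hv
  set A : Quaternion ℝ →L[ℝ] Quaternion ℝ :=
    ((ContinuousLinearMap.mul ℝ (Quaternion ℝ)).flip e).comp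
      ((starL' ℝ : Quaternion ℝ ≃L[ℝ] Quaternion ℝ) : Quaternion ℝ →L[ℝ] Quaternion ℝ) with hA
  have hAapp : ∀ q, A q = star q * e := fun q => rfl
  set f : (Fin 3 → ℝ) → Quaternion ℝ := fun x => A (W x) with hf
  have hWd : Differentiable ℝ W := hW.differentiable one_ne_zero
  have hhd : Differentiable ℝ h := hh.differentiable one_ne_zero
  have hfd : ∀ x, fderiv ℝ f x = A.comp (fderiv ℝ W x) :=
    fun x => (A.hasFDerivAt.comp x (hWd x).hasFDerivAt).fderiv
  have hfder : Differentiable ℝ f := fun x => (A.hasFDerivAt.comp x (hWd x).hasFDerivAt).differentiableAt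
  -- continuity facts
  have hWc : Continuous W := hW.continuous
  have hhcont : Continuous h := hh.continuous
  have hdWcont : Continuous fun x => fderiv ℝ W x v :=
    (hW.continuous_fderiv one_ne_zero).clm_apply continuous_const
  have hdhcont : Continuous fun x => fderiv ℝ h x v :=
    (hh.continuous_fderiv one_ne_zero).clm_apply continuous_const
  have hpdh0 : ∀ x, x ∉ tsupport h → fderiv ℝ h x = 0 := by
    intro x hx
    have := support_fderiv_subset (𝕜 := ℝ) (f := h)
    by_contra hne
    exact hx (this hne)
  have key := integral_bilinear_fderiv_right_eq_neg_left_of_integrable (μ := volume)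
    (B := ContinuousLinearMap.mul ℝ (Quaternion ℝ)) (f := f) (g := h) (v := v)
    ?_ ?_ ?_ (fun x _ => hfder x) (fun x _ => hhd x)
  · -- massage key into the goal
    simp only [ContinuousLinearMap.mul_apply'] at key
    have lhs_eq : (fun x => star (W x) * (e * pd l h x)) = fun x => f x * fderiv ℝ h x v := by
      funext x
      simp [hf, hAapp, pd, mul_assoc, hv]
    have rhs_eq : (fun x => star (e * pd l W x) * h x) = fun x => -(fderiv ℝ f x v * h x) := by
      funext x
      rw [hfd x]
      simp only [ContinuousLinearMap.comp_apply, hAapp, pd, star_mul, he]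
      simp [mul_assoc, neg_mul, mul_neg, hv]
    rw [lhs_eq, rhs_eq, integral_neg, key]
  · apply Continuous.integrable_of_hasCompactSupport
    · simp only [ContinuousLinearMap.mul_apply']
      exact ((A.continuous.comp hdWcont).congr (fun x => by rw [hfd x]; rfl)).mul hhcont
    · apply HasCompactSupport.intro hhc
      intro x hx
      simp [image_eq_zero_of_notMem_tsupport hx]
  · apply Continuous.integrable_of_hasCompactSupport
    · simp only [ContinuousLinearMap.mul_apply']
      exact (A.continuous.comp hWc).mul hdhcont
    · apply HasCompactSupport.intro hhc
      intro x hx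
      simp [hpdh0 x hx]
  · apply Continuous.integrable_of_hasCompactSupport
    · simp only [ContinuousLinearMap.mul_apply']
      exact (A.continuous.comp hWc).mul hhcont
    · apply HasCompactSupport.intro hhc
      intro x hx
      simp [image_eq_zero_of_notMem_tsupport hx]


set_option maxHeartbeats 1000000 in
/-- the full quaternion-valued adjoint identity for the operator
`D − β` (case `α ≡ 0`). -/
theorem formal_adjoint_quaternionic (Ω : Set (Fin 3 → ℝ)) (hΩ : IsOpen Ω)
    (β : (Fin 3 → ℝ) → Quaternion ℝ) (hβ : ContinuousOn β Ω)
    (w : (Fin 3 → ℝ) → Quaternion ℝ) (hw : ContDiffOn ℝ 1 w Ω)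
    (h : (Fin 3 → ℝ) → Quaternion ℝ) (hh : ContDiff ℝ (⊤ : ℕ∞) h)
    (hsupp : HasCompactSupport h) (hsuppΩ : tsupport h ⊆ Ω) :
    ∫ x in Ω, star (w x) * (Dq h x - star (β x) * h x) =
      ∫ x in Ω, star (Dq w x - β x * w x) * h x := by
  classical
  have hh1 : ContDiff ℝ 1 h := hh.of_le (by simp)
  set K := tsupport h with hKdef
  have hKc : IsCompact K := hsupp
  -- cutoff function
  obtain ⟨t, htc, hKt, htΩ⟩ := exists_compact_between hKc hΩ hsuppΩ
  obtain ⟨χ₀, hχev, hχ0, _⟩ := exists_contMDiffMap_one_nhds_of_subset_interior 𝓘(ℝ, Fin 3 → ℝ) (n := (⊤ : ℕ∞))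
      hKc.isClosed hKt
  set χ : (Fin 3 → ℝ) → ℝ := ⇑χ₀ with hχdef
  have hχsm : ContDiff ℝ 1 χ :=
    (contMDiff_iff_contDiff.mp χ₀.contMDiff).of_le (by exact_mod_cast le_top)
  have hχt : tsupport χ ⊆ t := closure_minimal (Function.support_subset_iff'.mpr hχ0) htc.isClosed
  obtain ⟨V, hVopen, hKV, hV1⟩ : ∃ V, IsOpen V ∧ K ⊆ V ∧ ∀ x ∈ V, χ x = 1 :=
    eventually_nhdsSet_iff_exists.mp hχev
  set W : (Fin 3 → ℝ) → Quaternion ℝ := fun y => χ y • w y with hWdef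
  have hWsm : ContDiff ℝ 1 W := by
    rw [contDiff_iff_contDiffAt]
    intro x
    by_cases hx : x ∈ Ω
    · exact hχsm.contDiffAt.smul (hw.contDiffAt (hΩ.mem_nhds hx))
    · have hxt : x ∉ tsupport χ := fun hmem => hx (htΩ (hχt hmem))
      have hev : W =ᶠ[nhds x] (fun _ => 0) := by
        filter_upwards [(isClosed_tsupport χ).isOpen_compl.mem_nhds hxt] with y hy
        simp [hWdef, image_eq_zero_of_notMem_tsupport hy]
      exact (contDiffAt_const (c := 0)).congr_of_eventuallyEq hev
  have hWeq : ∀ x ∈ V, W x = w x := fun x hx => by simp [hWdef, hV1 x hx]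
  have hfdeq : ∀ x ∈ V, fderiv ℝ W x = fderiv ℝ w x := by
    intro x hx
    apply Filter.EventuallyEq.fderiv_eq
    filter_upwards [hVopen.mem_nhds hx] with y hy
    exact hWeq y hy
  have hDqeq : ∀ x ∈ V, Dq W x = Dq w x := fun x hx => by simp [Dq, pd, hfdeq x hx]
  have hh0 : ∀ x, x ∉ K → h x = 0 := fun x hx => image_eq_zero_of_notMem_tsupport hx
  have hfh0 : ∀ x, x ∉ K → fderiv ℝ h x = 0 := by
    intro x hx
    by_contra hne
    exact hx (support_fderiv_subset ℝ (Function.mem_support.mpr hne))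
  have hDqh0 : ∀ x, x ∉ K → Dq h x = 0 := fun x hx => by simp [Dq, pd, hfh0 x hx]
  -- continuity facts
  have hcW : Continuous W := hWsm.continuous
  have hcstarW : Continuous fun x => star (W x) := hcW.star
  have hcpdh : ∀ l, Continuous (pd l h) :=
    fun l => (hh.continuous_fderiv (by simp)).clm_apply continuous_const
  have hcpdW : ∀ l, Continuous (pd l W) :=
    fun l => (hWsm.continuous_fderiv one_ne_zero).clm_apply continuous_const
  have hcDqh : Continuous (Dq h) := by
    unfold Dq
    exact ((continuous_const.mul (hcpdh 0)).add (continuous_const.mul (hcpdh 1))).add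
      (continuous_const.mul (hcpdh 2))
  have hcDqW : Continuous (Dq W) := by
    unfold Dq
    exact ((continuous_const.mul (hcpdW 0)).add (continuous_const.mul (hcpdW 1))).add
      (continuous_const.mul (hcpdW 2))
  have hbh : Continuous fun x => star (β x) * h x := by
    rw [continuous_iff_continuousAt]
    intro x
    by_cases hx : x ∈ Ω
    · exact ((hβ.continuousAt (hΩ.mem_nhds hx)).star).mul hh.continuous.continuousAt
    · have hxK : x ∉ K := fun hm => hx (hsuppΩ hm)
      have hev : (fun x => star (β x) * h x) =ᶠ[nhds x] (fun _ => 0) := by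
        filter_upwards [(isClosed_tsupport h).isOpen_compl.mem_nhds hxK] with y hy
        simp [hh0 y hy]
      exact continuousAt_const.congr hev.symm
  -- integrability helper
  have intg : ∀ f : (Fin 3 → ℝ) → Quaternion ℝ, Continuous f → (∀ x, x ∉ K → f x = 0) →
      Integrable f volume := fun f hf h0 =>
    hf.integrable_of_hasCompactSupport (HasCompactSupport.intro hKc h0)
  have hg1 : Integrable (fun x => star (W x) * Dq h x) volume :=
    intg _ (hcstarW.mul hcDqh) (fun x hx => by simp [hDqh0 x hx])
  have hP : Integrable (fun x => star (W x) * (star (β x) * h x)) volume :=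
    intg _ (hcstarW.mul hbh) (fun x hx => by simp [hh0 x hx])
  have hg3 : Integrable (fun x => star (Dq W x) * h x) volume :=
    intg _ (hcDqW.star.mul hh.continuous) (fun x hx => by simp [hh0 x hx])
  -- the core identity
  have main_eq : ∫ x, star (W x) * Dq h x = ∫ x, star (Dq W x) * h x := by
    have hsplit1 : (fun x => star (W x) * Dq h x) = fun x =>
        star (W x) * (qi * pd 0 h x) +
          (star (W x) * (qj * pd 1 h x) + star (W x) * (qk * pd 2 h x)) := by
      funext x; simp [Dq, mul_add, add_assoc]
    have hsplit3 : (fun x => star (Dq W x) * h x) = fun x =>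
        star (qi * pd 0 W x) * h x +
          (star (qj * pd 1 W x) * h x + star (qk * pd 2 W x) * h x) := by
      funext x; simp [Dq, star_add, add_mul, add_assoc]
    have i1 : ∀ (e : Quaternion ℝ) l, Integrable (fun x => star (W x) * (e * pd l h x)) volume :=
      fun e l => intg _ (hcstarW.mul (continuous_const.mul (hcpdh l)))
        (fun x hx => by simp [pd, hfh0 x hx])
    have i3 : ∀ (e : Quaternion ℝ) l, Integrable (fun x => star (e * pd l W x) * h x) volume :=
      fun e l => intg _ (((continuous_const.mul (hcpdW l)).star).mul hh.continuous)
        (fun x hx => by simp [hh0 x hx])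
    have s1 : ∫ x, star (W x) * Dq h x = (∫ x, star (W x) * (qi * pd 0 h x)) +
        ((∫ x, star (W x) * (qj * pd 1 h x)) + ∫ x, star (W x) * (qk * pd 2 h x)) := by
      have iadd1 : Integrable (fun x => star (W x) * (qj * pd 1 h x) +
          star (W x) * (qk * pd 2 h x)) volume := (i1 qj 1).add (i1 qk 2)
      rw [← integral_add (i1 qj 1) (i1 qk 2), ← integral_add (i1 qi 0) iadd1]
      exact integral_congr_ae (Filter.Eventually.of_forall fun x => by
        simp [Dq, mul_add, add_assoc])
    have s3 : ∫ x, star (Dq W x) * h x = (∫ x, star (qi * pd 0 W x) * h x) +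
        ((∫ x, star (qj * pd 1 W x) * h x) + ∫ x, star (qk * pd 2 W x) * h x) := by
      have iadd3 : Integrable (fun x => star (qj * pd 1 W x) * h x +
          star (qk * pd 2 W x) * h x) volume := (i3 qj 1).add (i3 qk 2)
      rw [← integral_add (i3 qj 1) (i3 qk 2), ← integral_add (i3 qi 0) iadd3]
      exact integral_congr_ae (Filter.Eventually.of_forall fun x => by
        simp [Dq, star_add, add_mul, add_assoc])
    rw [s1, s3, ibp_core W h hWsm hh1 hsupp qi star_qi 0,
      ibp_core W h hWsm hh1 hsupp qj star_qj 1,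
      ibp_core W h hWsm hh1 hsupp qk star_qk 2]
  -- assembling
  have lhs_fun : ∀ x, star (w x) * (Dq h x - star (β x) * h x)
      = star (W x) * (Dq h x - star (β x) * h x) := by
    intro x
    by_cases hx : x ∈ V
    · rw [hWeq x hx]
    · have hxK : x ∉ K := fun hmem => hx (hKV hmem)
      simp [hh0 x hxK, hDqh0 x hxK]
  have rhs_fun : ∀ x, star (Dq w x - β x * w x) * h x = star (Dq W x - β x * W x) * h x := by
    intro x
    by_cases hx : x ∈ V
    · rw [hWeq x hx, hDqeq x hx]
    · have hxK : x ∉ K := fun hmem => hx (hKV hmem)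
      simp [hh0 x hxK]
  calc ∫ x in Ω, star (w x) * (Dq h x - star (β x) * h x)
      = ∫ x in Ω, star (W x) * (Dq h x - star (β x) * h x) :=
        integral_congr_ae (Filter.Eventually.of_forall fun x => lhs_fun x)
    _ = ∫ x, star (W x) * (Dq h x - star (β x) * h x) := by
        apply setIntegral_eq_integral_of_forall_compl_eq_zero
        intro x hx
        have hxK : x ∉ K := fun hm => hx (hsuppΩ hm)
        simp [hh0 x hxK, hDqh0 x hxK]
    _ = (∫ x, star (W x) * Dq h x) - ∫ x, star (W x) * (star (β x) * h x) := by
        rw [← integral_sub hg1 hP]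
        congr 1
        funext x
        rw [mul_sub]
    _ = (∫ x, star (Dq W x) * h x) - ∫ x, star (W x) * (star (β x) * h x) := by rw [main_eq]
    _ = ∫ x, star (Dq W x - β x * W x) * h x := by
        rw [← integral_sub hg3 hP]
        congr 1
        funext x
        simp [star_sub, sub_mul, star_mul, mul_assoc]
    _ = ∫ x in Ω, star (Dq W x - β x * W x) * h x := by
        symm
        apply setIntegral_eq_integral_of_forall_compl_eq_zero
        intro x hx
        have hxK : x ∉ K := fun hm => hx (hsuppΩ hm)
        simp [hh0 x hxK]
    _ = ∫ x in Ω, star (Dq w x - β x * w x) * h x :=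
        (integral_congr_ae (Filter.Eventually.of_forall fun x => rhs_fun x)).symm


end
end

section
/- Let H be a real Hilbert space, let S : H → H be a continuous linear map with a continuous linear inverse, and let A ⊆ H be a closed linear subspace such that S(S*(A)) = A (the image of A under SS* is exactly A). Let P denote the orthogonal projection of H onto A. Then the orthogonal projection of H onto the closed subspace S⁻¹(A) is given by the composition S* ∘ P ∘ (S*)⁻¹; that is, for every x ∈ H, the orthogonal projection of x onto S⁻¹(A) equals S*( P( (S*)⁻¹(x) ) ). -/
/-!
Write `T = S*`. Since `S T` maps `A` into `A`, the operator `T` maps `A` into `K = S⁻¹(A)`, and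
for `w ∈ K` we have `⟪T y - T (P y), w⟫ = ⟪y - P y, S w⟫ = 0` because `S w ∈ A`. So `T (P y)` is
the orthogonal projection of `T y` onto `K`; take `y = (S*)⁻¹ x`.
-/

namespace ContinuousLinearMap

variable {𝕜 E F : Type*} [RCLike 𝕜]
  [NormedAddCommGroup E] [InnerProductSpace 𝕜 E] [CompleteSpace E]
  [NormedAddCommGroup F] [InnerProductSpace 𝕜 F] [CompleteSpace F]

theorem starProjection_comap_adjoint_apply (S : E →L[𝕜] F) (A : Submodule 𝕜 F)
    [A.HasOrthogonalProjection] [(A.comap (S : E →ₗ[𝕜] F)).HasOrthogonalProjection]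
    (hA : ∀ a ∈ A, S (adjoint S a) ∈ A) (y : F) :
    (A.comap (S : E →ₗ[𝕜] F)).starProjection (adjoint S y) = adjoint S (A.starProjection y) := by
  apply Submodule.eq_starProjection_of_mem_of_inner_eq_zero
  · exact hA _ (A.starProjection_apply_mem y)
  · intro w hw
    rw [← map_sub, adjoint_inner_left]
    exact A.starProjection_inner_eq_zero y (S w) hw

theorem _root_.ContinuousLinearEquiv.adjoint_apply_adjoint_symm_apply (S : E ≃L[𝕜] F) (x : E) :
    adjoint (S : E →L[𝕜] F) (adjoint (S.symm : F →L[𝕜] E) x) = x := by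
  rw [← comp_apply, ← adjoint_comp, ContinuousLinearEquiv.coe_symm_comp_coe, adjoint_id,
    id_apply]

end ContinuousLinearMap

theorem vekua_projection_abstract_general {H : Type*} [NormedAddCommGroup H]
    [InnerProductSpace ℝ H] [CompleteSpace H]
    (S : H ≃L[ℝ] H) (A : Submodule ℝ H)
    [CompleteSpace A]
    [CompleteSpace (Submodule.comap ((S : H →L[ℝ] H) : H →ₗ[ℝ] H) A)]
    (hSSA : (fun a => S (ContinuousLinearMap.adjoint (S : H →L[ℝ] H) a)) ''
        (A : Set H) = (A : Set H)) :
    ∀ x : H,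
      ((Submodule.orthogonalProjection (Submodule.comap ((S : H →L[ℝ] H) : H →ₗ[ℝ] H) A) x : H)) =
        (ContinuousLinearMap.adjoint (S : H →L[ℝ] H))
          ((Submodule.orthogonalProjection A
            ((ContinuousLinearMap.adjoint ((S.symm : H →L[ℝ] H))) x) : H)) := by
  intro x
  have hmaps : ∀ a ∈ A, S (ContinuousLinearMap.adjoint (S : H →L[ℝ] H) a) ∈ A := fun a ha =>
    hSSA.subset (Set.mem_image_of_mem _ ha)
  conv_lhs => rw [← S.adjoint_apply_adjoint_symm_apply x]
  exact (S : H →L[ℝ] H).starProjection_comap_adjoint_apply A hmaps _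

/-- if `S` is an invertible continuous linear map on a real Hilbert space and
`A` is a closed subspace with `S(S*(A)) = A`, then the orthogonal projection onto
`S⁻¹(A)` is `S* ∘ P ∘ (S*)⁻¹`, where `P` is the orthogonal projection onto `A`
(note `(S*)⁻¹ = (S⁻¹)*`). -/
theorem vekua_projection_abstract {H : Type*} [NormedAddCommGroup H]
    [InnerProductSpace ℝ H] [CompleteSpace H]
    (S : H ≃L[ℝ] H) (A : Submodule ℝ H) (hA : IsClosed (A : Set H))
    [CompleteSpace A]
    [CompleteSpace (Submodule.comap ((S : H →L[ℝ] H) : H →ₗ[ℝ] H) A)]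
    (hSSA : (fun a => S (ContinuousLinearMap.adjoint (S : H →L[ℝ] H) a)) ''
        (A : Set H) = (A : Set H)) :
    ∀ x : H,
      ((Submodule.orthogonalProjection (Submodule.comap ((S : H →L[ℝ] H) : H →ₗ[ℝ] H) A) x : H)) =
        (ContinuousLinearMap.adjoint (S : H →L[ℝ] H))
          ((Submodule.orthogonalProjection A
            ((ContinuousLinearMap.adjoint ((S.symm : H →L[ℝ] H))) x) : H)) :=
  vekua_projection_abstract_general S A hSSA
end

section
/- Let H be a real Hilbert space, let S : H → H be a continuous linear map with a continuous linear inverse, and let A ⊆ H be a closed linear subspace such that S(S*(A)) = A (the image of A under SS* is exactly A). Let P denote the orthogonal projection of H onto A. Then the orthogonal projection of H onto the closed subspace S⁻¹(A) is also given by S⁻¹ ∘ P ∘ S; that is, for every x ∈ H, the orthogonal projection of x onto S⁻¹(A) equals S⁻¹( P( S(x) ) ), and consequently S*( P( (S*)⁻¹(x) ) ) = S⁻¹( P( S(x) ) ) for all x ∈ H. -/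
/-!
Write `T = S*` and `K = S⁻¹(A)`. The hypothesis `S T A = A` says exactly that `K = T(A)`.
A map `M` that sends `A` into a closed subspace `K` and `Aᗮ` into `Kᗮ` intertwines the two
orthogonal projections, `P_K ∘ M = M ∘ P_A`, because it maps the decomposition
`y = P_A y + (y - P_A y)` to the decomposition of `M y` along `K ⊕ Kᗮ`. Both `S⁻¹` and `T`
have this property: `T` sends `Aᗮ` into `Kᗮ` since `⟪T b, k⟫ = ⟪b, S k⟫`, and `S⁻¹` does
since `⟪S⁻¹ b, T a⟫ = ⟪b, a⟫`. Applying the intertwining relation to `x = S⁻¹ (S x)` and to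
`x = T ((S⁻¹)* x)` gives the two claims.
-/

open ContinuousLinearMap

theorem ContinuousLinearEquiv.adjoint_apply_adjoint_symm_apply_s17 {𝕜 E F : Type*} [RCLike 𝕜]
    [NormedAddCommGroup E] [InnerProductSpace 𝕜 E] [NormedAddCommGroup F] [InnerProductSpace 𝕜 F]
    [CompleteSpace E] [CompleteSpace F] (S : E ≃L[𝕜] F) (x : E) :
    adjoint (S : E →L[𝕜] F) (adjoint (S.symm : F →L[𝕜] E) x) = x := by
  rw [← comp_apply, ← adjoint_comp]
  simp [adjoint_id]

namespace Submodule

variable {𝕜 E F : Type*} [RCLike 𝕜] [NormedAddCommGroup E] [InnerProductSpace 𝕜 E]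
  [NormedAddCommGroup F] [InnerProductSpace 𝕜 F]

theorem starProjection_apply_map_of_map_le {A : Submodule 𝕜 E} [A.HasOrthogonalProjection]
    {K : Submodule 𝕜 F} [K.HasOrthogonalProjection] (M : E →ₗ[𝕜] F) (hA : A.map M ≤ K)
    (hAperp : Aᗮ.map M ≤ Kᗮ) (y : E) :
    K.starProjection (M y) = M (A.starProjection y) := by
  refine eq_starProjection_of_mem_orthogonal (hA (mem_map_of_mem (coe_mem _))) ?_
  rw [← map_sub]
  exact hAperp (mem_map_of_mem (sub_starProjection_mem_orthogonal y))

variable [CompleteSpace E] [CompleteSpace F]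

theorem map_adjoint_orthogonal_le_orthogonal_comap (S : E →L[𝕜] F) (A : Submodule 𝕜 F) :
    Aᗮ.map (adjoint S : F →ₗ[𝕜] E) ≤ (A.comap (S : E →ₗ[𝕜] F))ᗮ := by
  rintro _ ⟨b, hb, rfl⟩ k hk
  rw [coe_coe, adjoint_inner_right]
  exact hb _ hk

theorem map_symm_orthogonal_le_orthogonal_comap (S : E ≃L[𝕜] F) (A : Submodule 𝕜 F)
    (hA : A.comap ((S : E →L[𝕜] F) : E →ₗ[𝕜] F) ≤ A.map (adjoint (S : E →L[𝕜] F) : F →ₗ[𝕜] E)) :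
    Aᗮ.map ((S.symm : F →L[𝕜] E) : F →ₗ[𝕜] E) ≤ (A.comap ((S : E →L[𝕜] F) : E →ₗ[𝕜] F))ᗮ := by
  rintro _ ⟨b, hb, rfl⟩ _ hk
  obtain ⟨a, ha, rfl⟩ := hA hk
  rw [coe_coe, adjoint_inner_left]
  simpa using hb a ha

theorem comap_eq_map_adjoint_of_image_eq (S : E ≃L[𝕜] F) (A : Submodule 𝕜 F)
    (hSSA : (fun a => S (adjoint (S : E →L[𝕜] F) a)) '' (A : Set F) = A) :
    A.comap ((S : E →L[𝕜] F) : E →ₗ[𝕜] F) = A.map (adjoint (S : E →L[𝕜] F) : F →ₗ[𝕜] E) := by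
  apply le_antisymm
  · intro k (hk : S k ∈ A)
    rw [← SetLike.mem_coe, ← hSSA] at hk
    obtain ⟨a, ha, hak⟩ := hk
    exact ⟨a, ha, S.injective hak⟩
  · rintro _ ⟨a, ha, rfl⟩
    show S (adjoint (S : E →L[𝕜] F) a) ∈ A
    rw [← SetLike.mem_coe, ← hSSA]
    exact Set.mem_image_of_mem _ ha

variable (S : E ≃L[𝕜] F) (A : Submodule 𝕜 F) [A.HasOrthogonalProjection]
  [(A.comap ((S : E →L[𝕜] F) : E →ₗ[𝕜] F)).HasOrthogonalProjection]

theorem starProjection_comap_apply_eq_symm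
    (hA : A.comap ((S : E →L[𝕜] F) : E →ₗ[𝕜] F) ≤ A.map (adjoint (S : E →L[𝕜] F) : F →ₗ[𝕜] E))
    (x : E) :
    (A.comap ((S : E →L[𝕜] F) : E →ₗ[𝕜] F)).starProjection x =
      S.symm (A.starProjection (S x)) := by
  simpa using starProjection_apply_map_of_map_le ((S.symm : F →L[𝕜] E) : F →ₗ[𝕜] E)
    (by rintro _ ⟨a, ha, rfl⟩; simpa using ha) (map_symm_orthogonal_le_orthogonal_comap S A hA)
    (S x)

theorem starProjection_comap_apply_eq_adjoint
    (hA : A.map (adjoint (S : E →L[𝕜] F) : F →ₗ[𝕜] E) ≤ A.comap ((S : E →L[𝕜] F) : E →ₗ[𝕜] F))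
    (x : E) :
    (A.comap ((S : E →L[𝕜] F) : E →ₗ[𝕜] F)).starProjection x =
      adjoint (S : E →L[𝕜] F) (A.starProjection (adjoint (S.symm : F →L[𝕜] E) x)) := by
  simpa [S.adjoint_apply_adjoint_symm_apply_s17] using
    starProjection_apply_map_of_map_le (adjoint (S : E →L[𝕜] F) : F →ₗ[𝕜] E) hA
      (map_adjoint_orthogonal_le_orthogonal_comap (S : E →L[𝕜] F) A)
      (adjoint (S.symm : F →L[𝕜] E) x)

end Submodule

theorem vekua_projection_abstract'_general {H : Type*} [NormedAddCommGroup H]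
    [InnerProductSpace ℝ H] [CompleteSpace H]
    (S : H ≃L[ℝ] H) (A : Submodule ℝ H)
    [CompleteSpace A]
    [CompleteSpace (Submodule.comap ((S : H →L[ℝ] H) : H →ₗ[ℝ] H) A)]
    (hSSA : (fun a => S (ContinuousLinearMap.adjoint (S : H →L[ℝ] H) a)) ''
        (A : Set H) = (A : Set H)) :
    (∀ x : H,
      ((Submodule.orthogonalProjectionOnto (Submodule.comap ((S : H →L[ℝ] H) : H →ₗ[ℝ] H) A) x : H)) =
        S.symm ((Submodule.orthogonalProjectionOnto A (S x) : H))) ∧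
    (∀ x : H,
      (ContinuousLinearMap.adjoint (S : H →L[ℝ] H))
          ((Submodule.orthogonalProjectionOnto A
            ((ContinuousLinearMap.adjoint ((S.symm : H →L[ℝ] H))) x) : H)) =
        S.symm ((Submodule.orthogonalProjectionOnto A (S x) : H))) := by
  have hK := Submodule.comap_eq_map_adjoint_of_image_eq S A hSSA
  simp only [← Submodule.starProjection_apply]
  refine ⟨Submodule.starProjection_comap_apply_eq_symm S A hK.le, fun x => ?_⟩
  rw [← Submodule.starProjection_comap_apply_eq_adjoint S A hK.ge,
    Submodule.starProjection_comap_apply_eq_symm S A hK.le]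

/-- under the hypotheses of Statement 16, the orthogonal projection onto
`S⁻¹(A)` is also given by `S⁻¹ ∘ P ∘ S`, and consequently
`S*(P((S*)⁻¹ x)) = S⁻¹(P(S x))` for all `x` (note `(S*)⁻¹ = (S⁻¹)*`). -/
theorem vekua_projection_abstract' {H : Type*} [NormedAddCommGroup H]
    [InnerProductSpace ℝ H] [CompleteSpace H]
    (S : H ≃L[ℝ] H) (A : Submodule ℝ H) (hA : IsClosed (A : Set H))
    [CompleteSpace A]
    [CompleteSpace (Submodule.comap ((S : H →L[ℝ] H) : H →ₗ[ℝ] H) A)]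
    (hSSA : (fun a => S (ContinuousLinearMap.adjoint (S : H →L[ℝ] H) a)) ''
        (A : Set H) = (A : Set H)) :
    (∀ x : H,
      ((Submodule.orthogonalProjectionOnto (Submodule.comap ((S : H →L[ℝ] H) : H →ₗ[ℝ] H) A) x : H)) =
        S.symm ((Submodule.orthogonalProjectionOnto A (S x) : H))) ∧
    (∀ x : H,
      (ContinuousLinearMap.adjoint (S : H →L[ℝ] H))
          ((Submodule.orthogonalProjectionOnto A
            ((ContinuousLinearMap.adjoint ((S.symm : H →L[ℝ] H))) x) : H)) =
        S.symm ((Submodule.orthogonalProjectionOnto A (S x) : H))) :=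
  vekua_projection_abstract'_general S A hSSA
end
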